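/- arXiv:1607.06297 — 2 statements merged into one kernel-verified Lean document; each statement's English description precedes it below -/
import Mathlib

section
/- Let p ∈ (1,∞) and δ ≥ 0. There exist constants c, C > 0 depending only on p such that for all 3×3 real matrices P, Q the following two-sided equivalences hold: c·φ_{|P^sym|}(|P^sym − Q^sym|) ≤ |F(P) − F(Q)|² ≤ C·φ_{|P^sym|}(|P^sym − Q^sym|); c·(δ + |P^sym| + |P^sym − Q^sym|)^{p−2}·|P^sym − Q^sym|² ≤ |F(P) − F(Q)|² ≤ C·(δ + |P^sym| + |P^sym − Q^sym|)^{p−2}·|P^sym − Q^sym|²; and c·φ'_{|P^sym|}(|P^sym − Q^sym|) ≤ |S(P) − S(Q)| ≤ C·φ'_{|P^sym|}(|P^sym − Q^sym|). -/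
/-- 3×3 real matrices, represented as functions. -/
abbrev M3 : Type := Fin 3 → Fin 3 → ℝ

/-- Symmetric part `P^sym = (P + Pᵀ)/2`. -/
noncomputable def sym3 (P : M3) : M3 := fun i j => (P i j + P j i) / 2

/-- Frobenius norm. -/
noncomputable def frob3 (P : M3) : ℝ := Real.sqrt (∑ i, ∑ j, (P i j) ^ 2)

/-- The derivative `φ'(t) = (δ+t)^(p-2)·t` of the N-function `φ = φ_{p,δ}`. -/
noncomputable def phiDeriv (p δ t : ℝ) : ℝ := (δ + t) ^ (p - 2) * t

/-- The shifted N-function `φ_a(t) = ∫₀ᵗ φ'(a+s)·s/(a+s) ds`. -/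
noncomputable def phiShift (p δ a t : ℝ) : ℝ :=
  ∫ s in (0:ℝ)..t, phiDeriv p δ (a + s) * s / (a + s)

/-- The shifted derivative `φ'_a(t) = φ'(a+t)·t/(a+t)`. -/
noncomputable def phiShiftDeriv (p δ a t : ℝ) : ℝ := phiDeriv p δ (a + t) * t / (a + t)

/-- The stress tensor `S(P) = (δ+|P^sym|)^{p−2} P^sym`. -/
noncomputable def Smat (p δ : ℝ) (P : M3) : M3 :=
  fun i j => (δ + frob3 (sym3 P)) ^ (p - 2) * sym3 P i j

/-- `F(P) = (δ+|P^sym|)^{(p−2)/2} P^sym`. -/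
noncomputable def Fmat (p δ : ℝ) (P : M3) : M3 :=
  fun i j => (δ + frob3 (sym3 P)) ^ ((p - 2) / 2) * sym3 P i j

/-!
Write `a = P^sym`, `b = Q^sym` as vectors of `ℝ^(3×3)` with the Frobenius inner product and
`V_q(a) = (δ + |a|)^q a`, so that `F = V_{(p-2)/2}` and `S = V_{p-2}`. For `q > -1`,
`|V_q(a) - V_q(b)| ≍ (δ + |a| + |a - b|)^q |a - b|`: both `|V_q(a) - V_q(b)|²` and `|a - b|²` are
affine in `⟨a, b⟩`, so it suffices to treat `b` parallel or antiparallel to `a`, where the estimate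
is the mean value theorem for `s ↦ (δ + s)^q s`. Since `φ'_a(t) = (δ + a + t)^(p-2) t` is increasing
in `t`, also `φ_a(t) = ∫₀ᵗ φ'_a ≍ t φ'_a(t)`, which gives the remaining equivalences.
-/

open Real Set

def ComparableWith (c C x y : ℝ) : Prop := c * y ≤ x ∧ x ≤ C * y

namespace ComparableWith

variable {c C d D x y z x' y' : ℝ}

lemma mono (h : ComparableWith c C x y) {c' C' : ℝ} (hc : c' ≤ c) (hC : C ≤ C') (hy : 0 ≤ y) :
    ComparableWith c' C' x y :=
  ⟨(mul_le_mul_of_nonneg_right hc hy).trans h.1, h.2.trans (mul_le_mul_of_nonneg_right hC hy)⟩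

lemma trans (hxy : ComparableWith c C x y) (hyz : ComparableWith d D y z) (hc : 0 ≤ c)
    (hC : 0 ≤ C) : ComparableWith (c * d) (C * D) x z :=
  ⟨by rw [mul_assoc]; exact (mul_le_mul_of_nonneg_left hyz.1 hc).trans hxy.1,
   by rw [mul_assoc]; exact hxy.2.trans (mul_le_mul_of_nonneg_left hyz.2 hC)⟩

lemma symm (h : ComparableWith c C x y) (hc : 0 < c) (hC : 0 < C) :
    ComparableWith C⁻¹ c⁻¹ y x :=
  ⟨by rw [inv_mul_le_iff₀ hC]; exact h.2, by rw [le_inv_mul_iff₀ hc]; exact h.1⟩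

lemma mul_right (h : ComparableWith c C x y) (hz : 0 ≤ z) :
    ComparableWith c C (x * z) (y * z) :=
  ⟨by rw [← mul_assoc]; exact mul_le_mul_of_nonneg_right h.1 hz,
   by rw [← mul_assoc]; exact mul_le_mul_of_nonneg_right h.2 hz⟩

lemma sq (h : ComparableWith c C x y) (hcy : 0 ≤ c * y) :
    ComparableWith (c ^ 2) (C ^ 2) (x ^ 2) (y ^ 2) :=
  ⟨by rw [← mul_pow]; exact pow_le_pow_left₀ hcy h.1 2,
   by rw [← mul_pow]; exact pow_le_pow_left₀ (hcy.trans h.1) h.2 2⟩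

lemma mul_left (h : ComparableWith c C x y) (hz : 0 ≤ z) :
    ComparableWith c C (z * x) (z * y) :=
  ⟨by rw [mul_left_comm]; exact mul_le_mul_of_nonneg_left h.1 hz,
   by rw [mul_left_comm]; exact mul_le_mul_of_nonneg_left h.2 hz⟩

lemma of_mul_left (h : ComparableWith c C (z * x) (z * y)) (hz : 0 < z) :
    ComparableWith c C x y :=
  ⟨le_of_mul_le_mul_left (by rw [mul_left_comm]; exact h.1) hz,
   le_of_mul_le_mul_left (by rw [mul_left_comm]; exact h.2) hz⟩

lemma add (h₁ : ComparableWith c C x y) (h₂ : ComparableWith c C x' y') :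
    ComparableWith c C (x + x') (y + y') :=
  ⟨by rw [mul_add]; exact add_le_add h₁.1 h₂.1, by rw [mul_add]; exact add_le_add h₁.2 h₂.2⟩

lemma of_sq (h : ComparableWith (c ^ 2) (C ^ 2) (x ^ 2) (y ^ 2)) (hc : 0 ≤ c) (hC : 0 ≤ C)
    (hx : 0 ≤ x) (hy : 0 ≤ y) : ComparableWith c C x y := by
  rw [ComparableWith, ← mul_pow, ← mul_pow] at h
  exact ⟨(pow_le_pow_iff_left₀ (by positivity) hx two_ne_zero).1 h.1,
    (pow_le_pow_iff_left₀ hx (by positivity) two_ne_zero).1 h.2⟩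

end ComparableWith

lemma rpow_le_rpow_abs_mul_rpow {m x y : ℝ} (z : ℝ) (hm : 1 ≤ m) (hy : 0 ≤ y) (hxy : x ≤ m * y)
    (hyx : y ≤ m * x) : x ^ z ≤ m ^ |z| * y ^ z := by
  have hm₀ : 0 < m := by linarith
  rcases hy.eq_or_lt with rfl | hy
  · obtain rfl : x = 0 := le_antisymm (by simpa using hxy) (by nlinarith)
    exact le_mul_of_one_le_left (rpow_nonneg le_rfl z) (one_le_rpow hm (abs_nonneg z))
  have hx : 0 < x := by nlinarith
  rcases le_total 0 z with hz | hz
  · rw [abs_of_nonneg hz, ← mul_rpow hm₀.le hy.le]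
    exact rpow_le_rpow hx.le hxy hz
  · rw [abs_of_nonpos hz, rpow_neg hm₀.le, ← inv_rpow hm₀.le, ← mul_rpow (by positivity) hy.le]
    refine rpow_le_rpow_of_nonpos (by positivity) ?_ hz
    rwa [inv_mul_le_iff₀ hm₀]

lemma comparableWith_rpow_of_le_mul {m x y : ℝ} (z : ℝ) (hm : 1 ≤ m) (hy : 0 ≤ y)
    (hxy : x ≤ m * y) (hyx : y ≤ m * x) :
    ComparableWith (m ^ |z|)⁻¹ (m ^ |z|) (x ^ z) (y ^ z) := by
  have hx : 0 ≤ x := by nlinarith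
  exact ⟨by rw [inv_mul_le_iff₀ (by positivity)]; exact rpow_le_rpow_abs_mul_rpow z hm hx hyx hxy,
    rpow_le_rpow_abs_mul_rpow z hm hy hxy hyx⟩

section ShiftedPower

variable {q δ : ℝ}

lemma hasDerivAt_add_rpow_mul {s : ℝ} (h : 0 < δ + s) :
    HasDerivAt (fun s => (δ + s) ^ q * s) ((δ + s) ^ (q - 1) * (δ + (1 + q) * s)) s := by
  have h₁ : HasDerivAt (fun s => (δ + s) ^ q) (1 * q * (δ + s) ^ (q - 1)) s :=
    ((hasDerivAt_id s).const_add δ).rpow_const (Or.inl h.ne')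
  refine (h₁.mul (hasDerivAt_id s)).congr_deriv ?_
  rw [show (δ + s) ^ q = (δ + s) ^ (q - 1) * (δ + s) by rw [← rpow_add_one h.ne']; ring_nf]
  simp only [id]
  ring

lemma comparableWith_deriv_add_rpow_mul (hδ : 0 ≤ δ) {s : ℝ} (hs : 0 ≤ s)
    (h : 0 < δ + s) :
    ComparableWith (min 1 (1 + q)) (max 1 (1 + q))
      ((δ + s) ^ (q - 1) * (δ + (1 + q) * s)) ((δ + s) ^ q) := by
  rw [show (δ + s) ^ q = (δ + s) ^ (q - 1) * (δ + s) by rw [← rpow_add_one h.ne']; ring_nf]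
  have hw : 0 ≤ (δ + s) ^ (q - 1) := rpow_nonneg h.le _
  have := min_le_left 1 (1 + q)
  have := min_le_right 1 (1 + q)
  have := le_max_left 1 (1 + q)
  have := le_max_right 1 (1 + q)
  constructor <;> nlinarith [mul_nonneg hw hs, mul_nonneg hw hδ]

lemma exists_add_rpow_mul_sub_eq {a b : ℝ} (hb : 0 < δ + b) (hba : b < a) :
    ∃ ξ ∈ Ioo b a, (δ + a) ^ q * a - (δ + b) ^ q * b
      = (δ + ξ) ^ (q - 1) * (δ + (1 + q) * ξ) * (a - b) := by
  obtain ⟨ξ, hξ, h⟩ := exists_hasDerivAt_eq_slope (fun s => (δ + s) ^ q * s) _ hba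
    (fun s hs => (hasDerivAt_add_rpow_mul (by linarith [hs.1])).continuousAt.continuousWithinAt)
    (fun s hs => hasDerivAt_add_rpow_mul (by linarith [hs.1]))
  exact ⟨ξ, hξ, by rw [h, div_mul_cancel₀ _ (sub_ne_zero.2 hba.ne')]⟩

lemma monotoneOn_add_rpow_mul (hq : -1 < q) (hδ : 0 ≤ δ) :
    MonotoneOn (fun s => (δ + s) ^ q * s) (Ici 0) := by
  intro b hb a _ hba
  simp only [mem_Ici] at hb
  rcases hb.eq_or_lt with rfl | hb
  · simpa using mul_nonneg (rpow_nonneg (by linarith) q) (by linarith : (0 : ℝ) ≤ a)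
  rcases hba.eq_or_lt with rfl | hlt
  · rfl
  obtain ⟨ξ, hξ, h⟩ := exists_add_rpow_mul_sub_eq (q := q) (show 0 < δ + b by linarith) hlt
  have hξ₀ : 0 < ξ := hb.trans hξ.1
  have hderiv := (comparableWith_deriv_add_rpow_mul (q := q) hδ hξ₀.le (by linarith)).1
  have hmin : 0 < min 1 (1 + q) := lt_min one_pos (by linarith)
  have hpow : 0 < (δ + ξ) ^ q := rpow_pos_of_pos (by linarith) q
  show (δ + b) ^ q * b ≤ (δ + a) ^ q * a
  rw [← sub_nonneg, h]
  exact mul_nonneg (le_trans (by positivity) hderiv) (by linarith)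

lemma comparableWith_add_rpow_mul_sub_of_le_two_mul (hq : -1 < q) (hδ : 0 ≤ δ) {a b : ℝ}
    (hab : a ≤ 2 * b) (hba : b ≤ a) :
    ComparableWith (min 1 (1 + q) * (2 ^ |q|)⁻¹) (max 1 (1 + q) * 2 ^ |q|)
      ((δ + a) ^ q * a - (δ + b) ^ q * b) ((δ + a) ^ q * (a - b)) := by
  rcases hba.eq_or_lt with rfl | hlt
  · simp [ComparableWith]
  obtain ⟨ξ, ⟨hbξ, hξa⟩, h⟩ := exists_add_rpow_mul_sub_eq (q := q) (show 0 < δ + b by linarith) hlt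
  rw [h]
  refine ComparableWith.mul_right ?_ (by linarith)
  exact (comparableWith_deriv_add_rpow_mul hδ (by linarith) (by linarith)).trans
    (comparableWith_rpow_of_le_mul q one_le_two (by linarith) (by linarith) (by linarith))
    (le_min zero_le_one (by linarith)) (zero_le_one.trans (le_max_left _ _))

lemma comparableWith_add_rpow_mul_sub (hq : -1 < q) (hδ : 0 ≤ δ) {a b : ℝ} (hb : 0 ≤ b)
    (hba : b ≤ a) :
    ComparableWith (min 1 (1 + q) * (2 ^ |q|)⁻¹ / 2) (max 2 (max 1 (1 + q) * 2 ^ |q|))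
      ((δ + a) ^ q * a - (δ + b) ^ q * b) ((δ + a) ^ q * (a - b)) := by
  have hw : 0 ≤ (δ + a) ^ q := rpow_nonneg (by linarith) q
  have hc : 0 ≤ min 1 (1 + q) * (2 ^ |q|)⁻¹ :=
    mul_nonneg (le_min zero_le_one (by linarith)) (by positivity)
  rcases le_total b (a / 2) with hb₂ | hb₂
  · have hnear := (comparableWith_add_rpow_mul_sub_of_le_two_mul hq hδ (a := a) (b := a / 2)
      (by linarith) (by linarith)).1
    have hmono := monotoneOn_add_rpow_mul hq hδ (mem_Ici.2 hb) (mem_Ici.2 (by linarith)) hb₂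
    have hfb : 0 ≤ (δ + b) ^ q * b := mul_nonneg (rpow_nonneg (by linarith) q) hb
    simp only at hmono
    constructor
    · have hhalf : (δ + a) ^ q * (a - b) / 2 ≤ (δ + a) ^ q * (a - a / 2) := by nlinarith
      calc _ = min 1 (1 + q) * (2 ^ |q|)⁻¹ * ((δ + a) ^ q * (a - b) / 2) := by ring
        _ ≤ _ := mul_le_mul_of_nonneg_left hhalf hc
        _ ≤ _ := hnear
        _ ≤ _ := by linarith
    · calc (δ + a) ^ q * a - (δ + b) ^ q * b ≤ 2 * ((δ + a) ^ q * (a - b)) := by nlinarith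
        _ ≤ _ := mul_le_mul_of_nonneg_right (le_max_left _ _) (mul_nonneg hw (by linarith))
  · exact (comparableWith_add_rpow_mul_sub_of_le_two_mul hq hδ (by linarith) hba).mono
      (half_le_self hc) (le_max_right _ _) (mul_nonneg hw (by linarith))

end ShiftedPower

section InnerProductSpace

variable {E : Type*} [NormedAddCommGroup E] [InnerProductSpace ℝ E]

lemma norm_smul_sub_smul_sq (r s : ℝ) (a b : E) :
    ‖r • a - s • b‖ ^ 2 = (r * ‖a‖ - s * ‖b‖) ^ 2 + 2 * (r * s) * (‖a‖ * ‖b‖ - inner ℝ a b) := by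
  rw [norm_sub_sq_real, norm_smul, norm_smul, real_inner_smul_left, real_inner_smul_right,
    Real.norm_eq_abs, Real.norm_eq_abs, mul_pow, mul_pow, sq_abs, sq_abs]
  ring

/-- Both `‖r • a - s • b‖²` and `‖a - b‖²` depend affinely on `⟪a, b⟫`, so it suffices to compare
them in the extreme cases where `b` is a nonnegative or a nonpositive multiple of `a`. -/
lemma ComparableWith.norm_smul_sub_smul {k K r s w : ℝ} {a b : E} (hk : 0 ≤ k) (hK : 0 ≤ K)
    (hw : 0 ≤ w) (hsub : ComparableWith k K |r * ‖a‖ - s * ‖b‖| (w * |‖a‖ - ‖b‖|))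
    (hadd : ComparableWith k K |r * ‖a‖ + s * ‖b‖| (w * (‖a‖ + ‖b‖))) :
    ComparableWith k K ‖r • a - s • b‖ (w * ‖a - b‖) := by
  have hsub₂ := hsub.sq (by positivity)
  have hadd₂ := hadd.sq (by positivity)
  simp only [mul_pow, sq_abs] at hsub₂ hadd₂
  refine ComparableWith.of_sq ?_ hk hK (norm_nonneg _) (by positivity)
  have hY := norm_smul_sub_smul_sq r s a b
  have hX : ‖a - b‖ ^ 2 = (‖a‖ - ‖b‖) ^ 2 + 2 * (‖a‖ * ‖b‖ - inner ℝ a b) := by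
    simpa using norm_smul_sub_smul_sq 1 1 a b
  set u := ‖a‖ * ‖b‖ - inner ℝ a b
  have hu₀ : 0 ≤ u := sub_nonneg.2 (real_inner_le_norm a b)
  have hu₁ : u ≤ 2 * (‖a‖ * ‖b‖) := by
    linarith [neg_le_of_abs_le (abs_real_inner_le_norm a b)]
  rcases (mul_nonneg (norm_nonneg a) (norm_nonneg b)).eq_or_lt with hab | hab
  · have hu : u = 0 := by linarith
    rw [hY, mul_pow, hX, hu]
    simpa using hsub₂
  refine ComparableWith.of_mul_left (z := 2 * (‖a‖ * ‖b‖)) ?_ (by positivity)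
  have e₁ : 2 * (‖a‖ * ‖b‖) * ‖r • a - s • b‖ ^ 2
      = (2 * (‖a‖ * ‖b‖) - u) * (r * ‖a‖ - s * ‖b‖) ^ 2 + u * (r * ‖a‖ + s * ‖b‖) ^ 2 := by
    rw [hY]; ring
  have e₂ : 2 * (‖a‖ * ‖b‖) * (w * ‖a - b‖) ^ 2
      = (2 * (‖a‖ * ‖b‖) - u) * (w ^ 2 * (‖a‖ - ‖b‖) ^ 2) + u * (w ^ 2 * (‖a‖ + ‖b‖) ^ 2) := by
    rw [mul_pow, hX]; ring
  rw [e₁, e₂]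
  exact (hsub₂.mul_left (by linarith)).add (hadd₂.mul_left hu₀)

variable {q : ℝ}

lemma exists_comparableWith_norm_rpow_smul_sub_of_norm_le (hq : -1 < q) :
    ∃ k K, 0 < k ∧ 0 < K ∧ ∀ δ, 0 ≤ δ → ∀ a b : E, ‖b‖ ≤ ‖a‖ →
      ComparableWith k K ‖(δ + ‖a‖) ^ q • a - (δ + ‖b‖) ^ q • b‖ ((δ + ‖a‖) ^ q * ‖a - b‖) := by
  set c := min 1 (1 + q) * (2 ^ |q|)⁻¹ / 2
  set C := max 2 (max 1 (1 + q) * 2 ^ |q|)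
  have hc : 0 < c := by have : 0 < min 1 (1 + q) := lt_min one_pos (by linarith); positivity
  have hC : 2 ≤ C := le_max_left _ _
  refine ⟨min c 2⁻¹, C, lt_min hc (by norm_num), by linarith, fun δ hδ a b hba => ?_⟩
  have hw : 0 ≤ (δ + ‖a‖) ^ q := rpow_nonneg (by positivity) q
  have hmono := monotoneOn_add_rpow_mul hq hδ (mem_Ici.2 (norm_nonneg b))
    (mem_Ici.2 (norm_nonneg a)) hba
  have hfb : 0 ≤ (δ + ‖b‖) ^ q * ‖b‖ := by positivity
  simp only at hmono
  refine ComparableWith.norm_smul_sub_smul (le_min hc.le (by norm_num)) (by linarith) hw ?_ ?_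
  · rw [abs_of_nonneg (by linarith), abs_of_nonneg (by linarith)]
    exact (comparableWith_add_rpow_mul_sub hq hδ (norm_nonneg b) hba).mono (min_le_left _ _)
      le_rfl (mul_nonneg hw (by linarith))
  · rw [abs_of_nonneg (by positivity)]
    have hwb : (δ + ‖a‖) ^ q * ‖b‖ ≤ (δ + ‖a‖) ^ q * ‖a‖ := mul_le_mul_of_nonneg_left hba hw
    constructor
    · calc min c 2⁻¹ * ((δ + ‖a‖) ^ q * (‖a‖ + ‖b‖))
          ≤ 2⁻¹ * ((δ + ‖a‖) ^ q * (‖a‖ + ‖b‖)) := by gcongr; exact min_le_right _ _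
        _ ≤ _ := by linarith
    · calc (δ + ‖a‖) ^ q * ‖a‖ + (δ + ‖b‖) ^ q * ‖b‖
          ≤ 2 * ((δ + ‖a‖) ^ q * (‖a‖ + ‖b‖)) := by nlinarith [norm_nonneg b]
        _ ≤ _ := by gcongr

lemma exists_comparableWith_norm_rpow_smul_sub (hq : -1 < q) :
    ∃ c C, 0 < c ∧ 0 < C ∧ ∀ δ, 0 ≤ δ → ∀ a b : E,
      ComparableWith c C ‖(δ + ‖a‖) ^ q • a - (δ + ‖b‖) ^ q • b‖
        ((δ + ‖a‖ + ‖a - b‖) ^ q * ‖a - b‖) := by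
  obtain ⟨k, K, hk, hK, h⟩ := exists_comparableWith_norm_rpow_smul_sub_of_norm_le (E := E) hq
  refine ⟨k * (3 ^ |q|)⁻¹, K * 3 ^ |q|, by positivity, by positivity, fun δ hδ a b => ?_⟩
  -- `δ + ‖a‖ + ‖a - b‖` lies within a factor `3` of `δ + max ‖a‖ ‖b‖`.
  have htri := norm_sub_le a b
  have htri' := norm_le_norm_add_norm_sub a b
  rcases le_total ‖b‖ ‖a‖ with hba | hab
  · exact (h δ hδ a b hba).trans ((comparableWith_rpow_of_le_mul q (by norm_num) (by positivity)
      (by linarith [norm_nonneg (a - b)]) (by linarith)).mul_right (norm_nonneg _)) hk.le hK.le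
  · have hswap := h δ hδ b a hab
    rw [norm_sub_rev, norm_sub_rev b] at hswap
    exact hswap.trans ((comparableWith_rpow_of_le_mul q (by norm_num) (by positivity)
      (by linarith [norm_nonneg a]) (by linarith)).mul_right (norm_nonneg _)) hk.le hK.le

lemma exists_comparableWith_sq_norm_rpow_half_smul_sub (hq : -2 < q) :
    ∃ c C, 0 < c ∧ 0 < C ∧ ∀ δ, 0 ≤ δ → ∀ a b : E,
      ComparableWith c C (‖(δ + ‖a‖) ^ (q / 2) • a - (δ + ‖b‖) ^ (q / 2) • b‖ ^ 2)
        ((δ + ‖a‖ + ‖a - b‖) ^ q * ‖a - b‖ ^ 2) := by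
  obtain ⟨c, C, hc, hC, h⟩ := exists_comparableWith_norm_rpow_smul_sub (E := E) (q := q / 2)
    (by linarith)
  refine ⟨c ^ 2, C ^ 2, by positivity, by positivity, fun δ hδ a b => ?_⟩
  have hsq := (h δ hδ a b).sq (by positivity)
  rwa [mul_pow, ← rpow_mul_natCast (by positivity), Nat.cast_ofNat,
    div_mul_cancel₀ q two_ne_zero] at hsq

end InnerProductSpace

section ShiftedNFunction

variable {p δ a t : ℝ}

lemma phiShiftDeriv_eq (ha : 0 ≤ a) (ht : 0 ≤ t) :
    phiShiftDeriv p δ a t = (δ + a + t) ^ (p - 2) * t := by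
  rcases (add_nonneg ha ht).eq_or_lt with h | h
  · obtain rfl : t = 0 := by linarith
    simp [phiShiftDeriv]
  · rw [phiShiftDeriv, phiDeriv, ← add_assoc]
    field_simp

lemma phiShift_eq_integral (ha : 0 ≤ a) (ht : 0 ≤ t) :
    phiShift p δ a t = ∫ s in (0 : ℝ)..t, (δ + a + s) ^ (p - 2) * s := by
  refine intervalIntegral.integral_congr fun s hs => ?_
  rw [uIcc_of_le ht] at hs
  exact phiShiftDeriv_eq ha hs.1

/-- The integrand `s ↦ φ'_a(s)` is monotone, so `φ_a(t)` lies between `(t/2) φ'_a(t/2)` and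
`t φ'_a(t)`. -/
lemma comparableWith_phiShift (hp : 1 < p) (hδ : 0 ≤ δ) (ha : 0 ≤ a) (ht : 0 ≤ t) :
    ComparableWith (4 * 2 ^ |p - 2|)⁻¹ 1 (phiShift p δ a t) ((δ + a + t) ^ (p - 2) * t ^ 2) := by
  set f := fun s => (δ + a + s) ^ (p - 2) * s
  have hmono : MonotoneOn f (Ici 0) := monotoneOn_add_rpow_mul (by linarith) (by positivity)
  have hint : ∀ u v, 0 ≤ u → 0 ≤ v → IntervalIntegrable f MeasureTheory.volume u v :=
    fun u v hu hv => (hmono.mono fun s hs => (le_min hu hv).trans hs.1).intervalIntegrable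
  rw [phiShift_eq_integral ha ht]
  constructor
  · have hhead : 0 ≤ ∫ s in (0 : ℝ)..t / 2, f s := intervalIntegral.integral_nonneg
      (by linarith) fun s hs => mul_nonneg (rpow_nonneg (by linarith [hs.1]) _) hs.1
    have htail : ∫ _ in t / 2..t, f (t / 2) ≤ ∫ s in t / 2..t, f s :=
      intervalIntegral.integral_mono_on (by linarith) intervalIntegrable_const
        (hint _ _ (by linarith) ht) fun s hs =>
          hmono (mem_Ici.2 (by linarith)) (mem_Ici.2 (by linarith [hs.1])) hs.1
    have hpow := (comparableWith_rpow_of_le_mul (p - 2) one_le_two (by linarith)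
      (x := δ + a + t / 2) (y := δ + a + t) (by linarith) (by linarith)).1
    rw [← intervalIntegral.integral_add_adjacent_intervals (hint 0 (t / 2) le_rfl (by linarith))
      (hint (t / 2) t (by linarith) ht)]
    rw [intervalIntegral.integral_const, smul_eq_mul] at htail
    simp only [f] at hhead htail ⊢
    rw [mul_inv]
    nlinarith [mul_le_mul_of_nonneg_right hpow (by positivity : 0 ≤ t / 2 * (t / 2))]
  · have hbound : ∫ s in (0 : ℝ)..t, f s ≤ ∫ _ in (0 : ℝ)..t, f t :=
      intervalIntegral.integral_mono_on ht (hint 0 t le_rfl ht) intervalIntegrable_const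
        fun s hs => hmono (mem_Ici.2 hs.1) (mem_Ici.2 ht) hs.2
    rw [intervalIntegral.integral_const, smul_eq_mul] at hbound
    simp only [f] at hbound ⊢
    linarith

end ShiftedNFunction

noncomputable def M3.toEuclidean : M3 →ₗ[ℝ] EuclideanSpace ℝ (Fin 3 × Fin 3) :=
  (WithLp.linearEquiv 2 ℝ (Fin 3 × Fin 3 → ℝ)).symm.toLinearMap ∘ₗ
    (LinearEquiv.curry ℝ ℝ (Fin 3) (Fin 3)).symm.toLinearMap

lemma frob3_eq_norm_toEuclidean (A : M3) : frob3 A = ‖M3.toEuclidean A‖ := by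
  simp [frob3, EuclideanSpace.norm_eq, Fintype.sum_prod_type, M3.toEuclidean]

lemma Fmat_eq_smul (p δ : ℝ) (P : M3) :
    Fmat p δ P = (δ + frob3 (sym3 P)) ^ ((p - 2) / 2) • sym3 P := rfl

lemma Smat_eq_smul (p δ : ℝ) (P : M3) :
    Smat p δ P = (δ + frob3 (sym3 P)) ^ (p - 2) • sym3 P := rfl

/-- For `p ∈ (1,∞)` there exist `c, C > 0` depending only on `p` such that for all
`δ ≥ 0` and all 3×3 matrices `P, Q`:
`|F(P)−F(Q)|² ∼ φ_{|P^sym|}(|P^sym−Q^sym|)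
             ∼ (δ+|P^sym|+|P^sym−Q^sym|)^{p−2}·|P^sym−Q^sym|²` and
`|S(P)−S(Q)| ∼ φ'_{|P^sym|}(|P^sym−Q^sym|)` (two-sided bounds). -/
theorem hammer_shifted_equivalences (p : ℝ) (hp : 1 < p) :
    ∃ c C : ℝ, 0 < c ∧ 0 < C ∧
      ∀ δ : ℝ, 0 ≤ δ → ∀ P Q : M3,
        (c * phiShift p δ (frob3 (sym3 P)) (frob3 (sym3 P - sym3 Q))
            ≤ (frob3 (Fmat p δ P - Fmat p δ Q)) ^ 2 ∧
          (frob3 (Fmat p δ P - Fmat p δ Q)) ^ 2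
            ≤ C * phiShift p δ (frob3 (sym3 P)) (frob3 (sym3 P - sym3 Q))) ∧
        (c * (δ + frob3 (sym3 P) + frob3 (sym3 P - sym3 Q)) ^ (p - 2)
              * (frob3 (sym3 P - sym3 Q)) ^ 2
            ≤ (frob3 (Fmat p δ P - Fmat p δ Q)) ^ 2 ∧
          (frob3 (Fmat p δ P - Fmat p δ Q)) ^ 2
            ≤ C * (δ + frob3 (sym3 P) + frob3 (sym3 P - sym3 Q)) ^ (p - 2)
              * (frob3 (sym3 P - sym3 Q)) ^ 2) ∧
        (c * phiShiftDeriv p δ (frob3 (sym3 P)) (frob3 (sym3 P - sym3 Q))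
            ≤ frob3 (Smat p δ P - Smat p δ Q) ∧
          frob3 (Smat p δ P - Smat p δ Q)
            ≤ C * phiShiftDeriv p δ (frob3 (sym3 P)) (frob3 (sym3 P - sym3 Q))) := by
  obtain ⟨cF, CF, hcF, hCF, hF⟩ := exists_comparableWith_sq_norm_rpow_half_smul_sub
    (E := EuclideanSpace ℝ (Fin 3 × Fin 3)) (q := p - 2) (by linarith)
  obtain ⟨cS, CS, hcS, hCS, hS⟩ := exists_comparableWith_norm_rpow_smul_sub
    (E := EuclideanSpace ℝ (Fin 3 × Fin 3)) (q := p - 2) (by linarith)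
  refine ⟨min cF cS, max (CF * (4 * 2 ^ |p - 2|)) (max CF CS), by positivity, by positivity,
    fun δ hδ P Q => ?_⟩
  simp only [Fmat_eq_smul, Smat_eq_smul, frob3_eq_norm_toEuclidean, map_sub, map_smul]
  set A := M3.toEuclidean (sym3 P)
  set B := M3.toEuclidean (sym3 Q)
  have hφ := comparableWith_phiShift hp hδ (norm_nonneg A) (norm_nonneg (A - B))
  have hT : 0 ≤ (δ + ‖A‖ + ‖A - B‖) ^ (p - 2) * ‖A - B‖ ^ 2 := by positivity
  rw [phiShiftDeriv_eq (norm_nonneg _) (norm_nonneg _)]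
  simp only [mul_assoc]
  refine ⟨?_, ?_, ?_⟩
  · exact ((hF δ hδ A B).trans (hφ.symm (by positivity) one_pos) hcF.le hCF.le).mono
      (by rw [inv_one, mul_one]; exact min_le_left _ _) (by rw [inv_inv]; exact le_max_left _ _)
      ((mul_nonneg (by positivity) hT).trans hφ.1)
  · exact (hF δ hδ A B).mono (min_le_left _ _) ((le_max_left _ _).trans (le_max_right _ _)) hT
  · exact (hS δ hδ A B).mono (min_le_right _ _) ((le_max_right _ _).trans (le_max_right _ _))
      (by positivity)
end

section
/- Let a : ℝ² → ℝ be measurable, h ≠ 0 and α ∈ {1,2}, and let f, g : ℝ³ → ℝ be measurable functions such that x ↦ f(x)·(T⁻g)(x) is Lebesgue integrable on ℝ³. Then x ↦ (T⁺f)(x)·g(x) is Lebesgue integrable on ℝ³ and ∫_{ℝ³} f·(T⁻g) dx = ∫_{ℝ³} (T⁺f)·g dx. Consequently, ∫_{ℝ³} f·(d⁺g) dx = ∫_{ℝ³} (d⁻f)·g dx whenever all products involved are integrable. -/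
open MeasureTheory

/-- Points of ℝ². -/
abbrev P2 : Type := Fin 2 → ℝ
/-- Points of ℝ³, written `x = (x', x₃)`. -/
abbrev P3 : Type := Fin 3 → ℝ

/-- The horizontal coordinates `x' = (x₁, x₂)` of a point of ℝ³. -/
def hor (x : P3) : P2 := fun β => x β.castSucc

/-- Build a point of ℝ³ from horizontal coordinates and a vertical coordinate. -/
def ext3 (y : P2) (z : ℝ) : P3 := fun i => Fin.lastCases z (fun β => y β) i

/-- The tangential translation map
`(x', x₃) ↦ (x' + h e_α, x₃ + a(x' + h e_α) − a(x'))`. -/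
noncomputable def shiftPt (a : P2 → ℝ) (h : ℝ) (α : Fin 2) (x : P3) : P3 :=
  ext3 (hor x + h • (Pi.single α 1 : P2))
    (x (Fin.last 2) + a (hor x + h • (Pi.single α 1 : P2)) - a (hor x))

/-- Tangential translation `T⁺g(x', x₃) = g(x' + h e_α, x₃ + a(x'+h e_α) − a(x'))`. -/
noncomputable def tplus (a : P2 → ℝ) (h : ℝ) (α : Fin 2) (g : P3 → ℝ) : P3 → ℝ :=
  fun x => g (shiftPt a h α x)

/-- Tangential translation `T⁻g(x', x₃) = g(x' − h e_α, x₃ + a(x'−h e_α) − a(x'))`. -/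
noncomputable def tminus (a : P2 → ℝ) (h : ℝ) (α : Fin 2) (g : P3 → ℝ) : P3 → ℝ :=
  fun x => g (shiftPt a (-h) α x)

/-- Tangential divided difference `d⁺g = (T⁺g − g)/h`. -/
noncomputable def dplus (a : P2 → ℝ) (h : ℝ) (α : Fin 2) (g : P3 → ℝ) : P3 → ℝ :=
  fun x => (tplus a h α g x - g x) / h

/-- Tangential divided difference `d⁻g = (T⁻g − g)/h`. -/
noncomputable def dminus (a : P2 → ℝ) (h : ℝ) (α : Fin 2) (g : P3 → ℝ) : P3 → ℝ :=
  fun x => (tminus a h α g x - g x) / h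

/-!
In the coordinates `(x', x₃)` the tangential translation is the translation `x' ↦ x' + h e_α`
followed, on each vertical line, by the translation `x₃ ↦ x₃ + (a(x' + h e_α) − a(x'))`. By
Fubini such a skew translation preserves Lebesgue measure, and the translation by `−h` is its
inverse, so the substitution `x ↦ shiftPt a h α x` turns `∫ f·(T⁻g)` into `∫ (T⁺f)·g`. The identity for the
divided differences follows by applying this with `−h` in place of `h`.
-/

theorem measurePreserving_add_right_skew {G H : Type*} [MeasurableSpace G] [AddGroup G]
    [MeasurableAdd G] [MeasurableSpace H] [AddGroup H] [MeasurableAdd₂ H]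
    (μ : Measure G) (ν : Measure H) [SFinite μ] [SFinite ν]
    [μ.IsAddRightInvariant] [ν.IsAddRightInvariant] (c : G) {φ : G → H} (hφ : Measurable φ) :
    MeasurePreserving (fun p : G × H => (p.1 + c, p.2 + φ p.1)) (μ.prod ν) (μ.prod ν) :=
  (measurePreserving_add_right μ c).skew_product
    (measurable_snd.add (hφ.comp measurable_fst))
    (Filter.Eventually.of_forall fun y => (measurePreserving_add_right ν (φ y)).map_eq)

lemma hor_ext3 (y : P2) (z : ℝ) : hor (ext3 y z) = y := by
  funext β
  simp [hor, ext3]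

lemma ext3_last (y : P2) (z : ℝ) : ext3 y z (Fin.last 2) = z :=
  Fin.lastCases_last

lemma ext3_hor_last (x : P3) : ext3 (hor x) (x (Fin.last 2)) = x := by
  funext i
  induction i using Fin.lastCases with
  | last => exact ext3_last _ _
  | cast β => simp only [ext3, hor, Fin.lastCases_castSucc]

noncomputable def vertSplit : P3 ≃ᵐ P2 × ℝ :=
  (MeasurableEquiv.piFinSuccAbove (fun _ => ℝ) (Fin.last 2)).trans MeasurableEquiv.prodComm

lemma vertSplit_apply (x : P3) : vertSplit x = (hor x, x (Fin.last 2)) := by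
  ext β
  · exact congrArg x (congrFun Fin.succAbove_last β)
  · rfl

lemma vertSplit_symm_apply (p : P2 × ℝ) : vertSplit.symm p = ext3 p.1 p.2 :=
  vertSplit.symm_apply_eq.2 (by rw [vertSplit_apply, hor_ext3, ext3_last])

lemma measurePreserving_vertSplit : MeasurePreserving vertSplit volume volume :=
  (volume_preserving_piFinSuccAbove (fun _ : Fin 3 => ℝ) (Fin.last 2)).trans
    Measure.measurePreserving_swap

lemma shiftPt_eq_comp (a : P2 → ℝ) (h : ℝ) (α : Fin 2) :
    shiftPt a h α = vertSplit.symm ∘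
      (fun p : P2 × ℝ => (p.1 + h • Pi.single α 1,
        p.2 + (a (p.1 + h • Pi.single α 1) - a p.1))) ∘ vertSplit := by
  funext x
  simp only [Function.comp_apply, vertSplit_apply, vertSplit_symm_apply, shiftPt, add_sub_assoc]

lemma measurePreserving_shiftPt {a : P2 → ℝ} (ha : Measurable a) (h : ℝ) (α : Fin 2) :
    MeasurePreserving (shiftPt a h α) volume volume := by
  rw [shiftPt_eq_comp]
  exact measurePreserving_vertSplit.symm.comp
    ((measurePreserving_add_right_skew _ _ _
      ((ha.comp (measurable_add_const _)).sub ha)).comp measurePreserving_vertSplit)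

lemma shiftPt_neg_shiftPt (a : P2 → ℝ) (h : ℝ) (α : Fin 2) (x : P3) :
    shiftPt a (-h) α (shiftPt a h α x) = x := by
  have hor_back : hor x + h • (Pi.single α 1 : P2) + (-h) • Pi.single α 1 = hor x := by
    simp [neg_smul]
  simp only [shiftPt, hor_ext3, ext3_last, hor_back, add_sub_cancel_right, sub_add_cancel,
    ext3_hor_last]

noncomputable def shiftEquiv {a : P2 → ℝ} (ha : Measurable a) (h : ℝ) (α : Fin 2) :
    P3 ≃ᵐ P3 where
  toFun := shiftPt a h α
  invFun := shiftPt a (-h) α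
  left_inv := shiftPt_neg_shiftPt a h α
  right_inv x := by simpa using shiftPt_neg_shiftPt a (-h) α x
  measurable_toFun := (measurePreserving_shiftPt ha h α).measurable
  measurable_invFun := (measurePreserving_shiftPt ha (-h) α).measurable

lemma tminus_neg (a : P2 → ℝ) (h : ℝ) (α : Fin 2) : tminus a (-h) α = tplus a h α := by
  funext g x
  simp [tminus, tplus]

theorem integrable_tplus_mul_and_integral_eq {a : P2 → ℝ} (ha : Measurable a) (h : ℝ)
    (α : Fin 2) {f g : P3 → ℝ} (hint : Integrable (fun x => f x * tminus a h α g x)) :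
    Integrable (fun x => tplus a h α f x * g x) ∧
      ∫ x, f x * tminus a h α g x = ∫ x, tplus a h α f x * g x := by
  have hT : MeasurePreserving (shiftEquiv ha h α) volume volume := measurePreserving_shiftPt ha h α
  have substitute : (fun x => tplus a h α f x * g x) =
      (fun x => f x * tminus a h α g x) ∘ shiftEquiv ha h α := by
    funext x
    simp only [Function.comp_apply, tplus, tminus, shiftEquiv, MeasurableEquiv.coe_mk,
      Equiv.coe_fn_mk, shiftPt_neg_shiftPt]
  rw [substitute]
  exact ⟨(hT.integrable_comp_emb (shiftEquiv ha h α).measurableEmbedding).2 hint,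
    (hT.integral_comp' _).symm⟩

theorem tangential_integration_by_parts_general
    (a : P2 → ℝ) (ha : Measurable a) (h : ℝ) (α : Fin 2)
    (f g : P3 → ℝ)
    (hint : Integrable (fun x => f x * tminus a h α g x)) :
    (Integrable (fun x => tplus a h α f x * g x) ∧
      ∫ x : P3, f x * tminus a h α g x = ∫ x : P3, tplus a h α f x * g x) ∧
    (Integrable (fun x => f x * dplus a h α g x) →
      Integrable (fun x => dminus a h α f x * g x) →
      Integrable (fun x => f x * g x) →
      Integrable (fun x => f x * tplus a h α g x) →
      Integrable (fun x => tminus a h α f x * g x) →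
      ∫ x : P3, f x * dplus a h α g x = ∫ x : P3, dminus a h α f x * g x) := by
  refine ⟨integrable_tplus_mul_and_integral_eq ha h α hint, fun _ _ hfg hfTg hTfg => ?_⟩
  have swap_shift : ∫ x, f x * tplus a h α g x = ∫ x, tminus a h α f x * g x := by
    have := (integrable_tplus_mul_and_integral_eq ha (-h) α (f := f) (g := g)
      (by rwa [tminus_neg])).2
    rwa [tminus_neg] at this
  calc ∫ x, f x * dplus a h α g x
      = ∫ x, (f x * tplus a h α g x - f x * g x) / h := by
        congr 1 with x
        rw [dplus, mul_div_assoc', mul_sub]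
    _ = ∫ x, (tminus a h α f x * g x - f x * g x) / h := by
        rw [integral_div, integral_div, integral_sub hfTg hfg, integral_sub hTfg hfg, swap_shift]
    _ = ∫ x, dminus a h α f x * g x := by
        congr 1 with x
        rw [dminus, div_mul_eq_mul_div, sub_mul]

/-- Integration by parts for tangential translations: if `a` is measurable, `h ≠ 0`,
`f, g` are measurable and `f·(T⁻g)` is Lebesgue integrable on ℝ³, then `(T⁺f)·g` is
integrable and `∫ f·(T⁻g) = ∫ (T⁺f)·g`. Consequently `∫ f·(d⁺g) = ∫ (d⁻f)·g`
whenever all products involved are integrable. -/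
theorem tangential_integration_by_parts
    (a : P2 → ℝ) (ha : Measurable a) (h : ℝ) (hh : h ≠ 0) (α : Fin 2)
    (f g : P3 → ℝ) (hf : Measurable f) (hg : Measurable g)
    (hint : Integrable (fun x => f x * tminus a h α g x)) :
    (Integrable (fun x => tplus a h α f x * g x) ∧
      ∫ x : P3, f x * tminus a h α g x = ∫ x : P3, tplus a h α f x * g x) ∧
    (Integrable (fun x => f x * dplus a h α g x) →
      Integrable (fun x => dminus a h α f x * g x) →
      Integrable (fun x => f x * g x) →
      Integrable (fun x => f x * tplus a h α g x) →
      Integrable (fun x => tminus a h α f x * g x) →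
      ∫ x : P3, f x * dplus a h α g x = ∫ x : P3, dminus a h α f x * g x) :=
  tangential_integration_by_parts_general a ha h α f g hint
end
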